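/- Let (F_τ) be a monotone increasing family in 𝒮, continuous in τ. Then for every τ, the sets Up_{τ+} = ⋂_{δ>0} Up(F_{τ+δ}) and Down_τ = Down(F_τ) are disjoint: Up_{τ+} ∩ Down_τ = ∅. -/

import Mathlib

/-!
Drifting down is an open condition in `𝒮`: the gap `η - F(η)` of a continuous down-drifting
graph is bounded below on the compact base `Σ`, so a point of `Down_τ` stays in `Down_t` for
`t > τ` close to `τ`. It then suffices that `Up(G) ∩ Down(G) = ∅` for a single `G`. A common
point gives an up-drifting `γ` and a down-drifting `η` with `γ < η` at `ω` but `γ > η` at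
`σ⁻¹ω`; monotonicity of the fibre maps makes the open set `{γ < η}` forward invariant under
`σ`, so by transitivity it meets the nonempty open set `{η < γ}`, which is absurd.
-/

open Set MeasureTheory Filter Topology

namespace SkewPaper

/-- A bi-infinite sequence over the alphabet `{1,…,N}` (modelled as `Fin N`) is allowed
by the 0-1 transition matrix `A`. -/
def Allowed {N : ℕ} (A : Fin N → Fin N → Bool) (ω : ℤ → Fin N) : Prop :=
  ∀ n : ℤ, A (ω n) (ω (n + 1)) = true

/-- The subshift of finite type `Σ ⊆ {1,…,N}^ℤ` determined by the transition matrix `A`,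
with the product (= metric `d(ω̄,ω) = 2^{-min{|n| : ω̄ₙ ≠ ωₙ}}`) topology. -/
abbrev Sig (N : ℕ) (A : Fin N → Fin N → Bool) : Type :=
  {ω : ℤ → Fin N // Allowed A ω}

variable {N : ℕ} {A : Fin N → Fin N → Bool}

/-- The left shift `σ : Σ → Σ`. -/
def shift (ω : Sig N A) : Sig N A :=
  ⟨fun n => ω.1 (n + 1), fun n => ω.2 (n + 1)⟩

/-- The inverse `σ⁻¹` of the left shift. -/
def shiftInv (ω : Sig N A) : Sig N A :=
  ⟨fun n => ω.1 (n - 1), fun n => by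
    show A (ω.1 (n - 1)) (ω.1 (n + 1 - 1)) = true
    have h := ω.2 (n - 1)
    have e1 : n - 1 + 1 = n := by ring
    have e2 : n + 1 - 1 = n := by ring
    rw [e1] at h; rw [e2]; exact h⟩

/-- Topological transitivity of the shift `σ` on `Σ`. -/
def ShiftTransitive (N : ℕ) (A : Fin N → Fin N → Bool) : Prop :=
  ∀ U V : Set (Sig N A), IsOpen U → IsOpen V → U.Nonempty → V.Nonempty →
    ∃ n : ℕ, ((shift (A := A))^[n] '' U ∩ V).Nonempty

/-- The class `𝒮` of skew products `F(ω,x) = (σω, f_ω(x))` over the subshift `Σ`,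
with fiber `I = [0,1]`.  The fiber maps `f_ω` (encoded as maps `ℝ → ℝ` whose behaviour
is prescribed on `I`) are orientation-preserving `C¹` diffeomorphisms sending `I`
strictly inside itself, with `C¹` inverses `fInv ω`, and `ω ↦ f_ω` is continuous in the
`C¹` sense. -/
structure SkewSys (N : ℕ) (A : Fin N → Fin N → Bool) where
  f : Sig N A → ℝ → ℝ
  fInv : Sig N A → ℝ → ℝ
  contDiff : ∀ ω, ContDiffOn ℝ 1 (f ω) (Icc 0 1)
  deriv_pos : ∀ ω, ∀ x ∈ Icc (0:ℝ) 1, 0 < derivWithin (f ω) (Icc 0 1) x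
  maps_in : ∀ ω, MapsTo (f ω) (Icc 0 1) (Ioo 0 1)
  leftInv : ∀ ω, ∀ x ∈ Icc (0:ℝ) 1, fInv ω (f ω x) = x
  inv_contDiff : ∀ ω, ContDiffOn ℝ 1 (fInv ω) (Icc 0 1)
  cont : ContinuousOn (fun p : Sig N A × ℝ => f p.1 p.2) (univ ×ˢ Icc 0 1)
  cont_deriv : ContinuousOn
    (fun p : Sig N A × ℝ => derivWithin (f p.1) (Icc 0 1) p.2) (univ ×ˢ Icc 0 1)
  inv_cont : ContinuousOn (fun p : Sig N A × ℝ => fInv p.1 p.2) (univ ×ˢ Icc 0 1)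
  inv_cont_deriv : ContinuousOn
    (fun p : Sig N A × ℝ => derivWithin (fInv p.1) (Icc 0 1) p.2) (univ ×ˢ Icc 0 1)

/-- The skew product map `F : Σ × ℝ → Σ × ℝ`, `(ω,x) ↦ (σω, f_ω(x))`. -/
def FMap (F : SkewSys N A) : Sig N A × ℝ → Sig N A × ℝ :=
  fun p => (shift p.1, F.f p.1 p.2)

/-- The phase space `Σ × I`, viewed inside `Σ × ℝ`. -/
def phaseSpace (N : ℕ) (A : Fin N → Fin N → Bool) : Set (Sig N A × ℝ) :=
  univ ×ˢ Icc 0 1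

/-- The graph of `γ` drifts up: `F(Γ) > Γ`, i.e. the graph function
`ω ↦ f_{σ⁻¹ω}(γ(σ⁻¹ω))` of `F(Γ)` is pointwise strictly above `γ`. -/
def DriftsUp (F : SkewSys N A) (γ : Sig N A → ℝ) : Prop :=
  ∀ ω, γ ω < F.f (shiftInv ω) (γ (shiftInv ω))

/-- The graph of `γ` drifts down: `F(Γ) < Γ`. -/
def DriftsDown (F : SkewSys N A) (γ : Sig N A → ℝ) : Prop :=
  ∀ ω, F.f (shiftInv ω) (γ (shiftInv ω)) < γ ω

/-- `Up(F)`: the set of points `p = (ω,x)` drifting up, i.e. such that there is a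
continuous `γ : Σ → I` whose graph drifts up with `γ(ω) < x < f_{σ⁻¹ω}(γ(σ⁻¹ω))`. -/
def Up (F : SkewSys N A) : Set (Sig N A × ℝ) :=
  {p | ∃ γ : Sig N A → ℝ, Continuous γ ∧ (∀ ω, γ ω ∈ Icc (0:ℝ) 1) ∧ DriftsUp F γ ∧
    γ p.1 < p.2 ∧ p.2 < F.f (shiftInv p.1) (γ (shiftInv p.1))}

/-- `Down(F)`: the set of points drifting down. -/
def Down (F : SkewSys N A) : Set (Sig N A × ℝ) :=
  {p | ∃ γ : Sig N A → ℝ, Continuous γ ∧ (∀ ω, γ ω ∈ Icc (0:ℝ) 1) ∧ DriftsDown F γ ∧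
    F.f (shiftInv p.1) (γ (shiftInv p.1)) < p.2 ∧ p.2 < γ p.1}

/-- The anchored set `Indiff(F) = (Σ × I) \ (Up(F) ∪ Down(F))`. -/
def Indiff (F : SkewSys N A) : Set (Sig N A × ℝ) :=
  phaseSpace N A \ (Up F ∪ Down F)

/-- The nonwandering set `Ω(F)`: points `p ∈ Σ × I` such that every neighborhood `U`
of `p` in `Σ × I` satisfies `F^n(U) ∩ U ≠ ∅` for some `n ≥ 1`. -/
def NonWandering (F : SkewSys N A) : Set (Sig N A × ℝ) :=
  {p | p ∈ phaseSpace N A ∧ ∀ U : Set (Sig N A × ℝ), IsOpen U → p ∈ U →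
    ∃ n : ℕ, 1 ≤ n ∧ ∃ q ∈ U ∩ phaseSpace N A, (FMap F)^[n] q ∈ U ∩ phaseSpace N A}

/-- The partial order `F ≺ F̃` on `𝒮`: `f_ω(x) < f̃_ω(x)` for all `ω ∈ Σ`, `x ∈ I`. -/
def Prec (F G : SkewSys N A) : Prop :=
  ∀ ω, ∀ x ∈ Icc (0:ℝ) 1, F.f ω x < G.f ω x

/-- A skew product is multistep if its fiber maps depend only on finitely many
coordinates `ω_{-m}, …, ω_m` of `ω`. -/
def Multistep (F : SkewSys N A) : Prop :=
  ∃ m : ℕ, ∀ ω ω' : Sig N A, (∀ n : ℤ, n.natAbs ≤ m → ω.1 n = ω'.1 n) → F.f ω = F.f ω'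

/-- The `C¹` distance `dist(F,F̃) = max_ω dist_{C¹}(f_ω^{±1}, f̃_ω^{±1})` on `𝒮`. -/
noncomputable def SDist (F G : SkewSys N A) : ℝ :=
  ⨆ p : Sig N A × Icc (0:ℝ) 1,
    max
      (max |F.f p.1 p.2 - G.f p.1 p.2|
        |derivWithin (F.f p.1) (Icc 0 1) p.2 - derivWithin (G.f p.1) (Icc 0 1) p.2|)
      (max |F.fInv p.1 p.2 - G.fInv p.1 p.2|
        |derivWithin (F.fInv p.1) (Icc 0 1) p.2 - derivWithin (G.fInv p.1) (Icc 0 1) p.2|)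

/-- The standard measure `m = μ × Leb` on `Σ × I` (with `Leb` Lebesgue measure
restricted to `I = [0,1]`). -/
noncomputable def stdMeasure (μ : Measure (Sig N A)) : Measure (Sig N A × ℝ) :=
  μ.prod (volume.restrict (Icc 0 1))

/-- A family `(F_τ)_{τ ∈ (a,b)}` in `𝒮` is monotone increasing if `F_{τ₁} ≺ F_{τ₂}`
whenever `τ₁ < τ₂`. -/
def MonoFam (F : ℝ → SkewSys N A) (a b : ℝ) : Prop :=
  ∀ τ₁ ∈ Ioo a b, ∀ τ₂ ∈ Ioo a b, τ₁ < τ₂ → Prec (F τ₁) (F τ₂)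

/-- A family `(F_τ)_{τ ∈ (a,b)}` in `𝒮` is continuous in `τ` for the metric `dist`. -/
def ContFam (F : ℝ → SkewSys N A) (a b : ℝ) : Prop :=
  ∀ τ ∈ Ioo a b, ∀ ε : ℝ, 0 < ε → ∃ δ > 0,
    ∀ τ' ∈ Ioo a b, |τ' - τ| < δ → SDist (F τ') (F τ) < ε

/-- The pushforward `Γ ↦ F(Γ)` on graph functions: the graph of `pushGraph F γ`,
namely `ω ↦ f_{σ⁻¹ω}(γ(σ⁻¹ω))`, is the image `F(Γ)` of the graph `Γ` of `γ`. -/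
def pushGraph (F : SkewSys N A) (γ : Sig N A → ℝ) : Sig N A → ℝ :=
  fun ω => F.f (shiftInv ω) (γ (shiftInv ω))

lemma shiftInv_shift (ω : Sig N A) : shiftInv (shift ω) = ω :=
  Subtype.ext <| funext fun n => congrArg ω.1 (sub_add_cancel n 1)

lemma isClosed_setOf_allowed : IsClosed {ω : ℤ → Fin N | Allowed A ω} := by
  simp only [Allowed, ofPred_forall]
  exact isClosed_iInter fun n =>
    (isClosed_discrete {p : Fin N × Fin N | A p.1 p.2 = true}).preimage
      (f := fun ω : ℤ → Fin N => (ω n, ω (n + 1))) (by fun_prop)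

instance : CompactSpace (Sig N A) :=
  isCompact_iff_compactSpace.mp isClosed_setOf_allowed.isCompact

lemma continuous_shiftInv : Continuous (shiftInv (N := N) (A := A)) := by
  refine Continuous.subtype_mk ?_ _
  exact continuous_pi fun n => (continuous_apply (n - 1)).comp continuous_subtype_val

lemma ShiftTransitive.inter_nonempty_of_mapsTo (htrans : ShiftTransitive N A)
    {U V : Set (Sig N A)} (hU : IsOpen U) (hV : IsOpen V) (hUne : U.Nonempty)
    (hVne : V.Nonempty) (hUU : MapsTo shift U U) : (U ∩ V).Nonempty := by
  obtain ⟨n, hn⟩ := htrans U V hU hV hUne hVne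
  exact hn.mono (inter_subset_inter_left V ((hUU.iterate n).image_subset))

namespace SkewSys

variable (F G : SkewSys N A)

lemma strictMonoOn_f (ω : Sig N A) : StrictMonoOn (F.f ω) (Icc 0 1) :=
  strictMonoOn_of_hasDerivWithinAt_pos (convex_Icc 0 1) (F.contDiff ω).continuousOn
    (fun x hx => ((((F.contDiff ω).differentiableOn one_ne_zero) x
      (interior_subset hx)).hasDerivWithinAt).mono interior_subset)
    (fun x hx => F.deriv_pos ω x (interior_subset hx))

lemma continuous_pushGraph {γ : Sig N A → ℝ} (hγ : Continuous γ)
    (hγI : ∀ ω, γ ω ∈ Icc (0:ℝ) 1) : Continuous (pushGraph F γ) :=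
  (F.cont.comp_continuous (continuous_id.prodMk hγ) fun ω => ⟨mem_univ _, hγI ω⟩).comp
    continuous_shiftInv

lemma abs_f_sub_f_le_sDist (ω : Sig N A) {x : ℝ} (hx : x ∈ Icc (0:ℝ) 1) :
    |F.f ω x - G.f ω x| ≤ SDist F G := by
  have restrict {g : Sig N A × ℝ → ℝ} (hg : ContinuousOn g (univ ×ˢ Icc 0 1)) :
      Continuous fun p : Sig N A × Icc (0:ℝ) 1 => g (p.1, (p.2 : ℝ)) :=
    hg.comp_continuous (continuous_fst.prodMk (continuous_subtype_val.comp continuous_snd))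
      fun p => ⟨mem_univ _, p.2.2⟩
  have hbdd := isCompact_range ((((restrict F.cont).sub (restrict G.cont)).abs.max
    ((restrict F.cont_deriv).sub (restrict G.cont_deriv)).abs).max
    (((restrict F.inv_cont).sub (restrict G.inv_cont)).abs.max
    ((restrict F.inv_cont_deriv).sub (restrict G.inv_cont_deriv)).abs)) |>.bddAbove
  exact ((le_max_left _ _).trans (le_max_left _ _)).trans (le_ciSup hbdd (ω, ⟨x, hx⟩))

lemma mapsTo_shift_setOf_lt {γ η : Sig N A → ℝ} (hγI : ∀ ω, γ ω ∈ Icc (0:ℝ) 1)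
    (hηI : ∀ ω, η ω ∈ Icc (0:ℝ) 1) (hγ : DriftsUp F γ) (hη : DriftsDown F η) :
    MapsTo shift {ω | γ ω < η ω} {ω | γ ω < η ω} := by
  intro ω (hω : γ ω < η ω)
  have hup := hγ (shift ω)
  have hdown := hη (shift ω)
  rw [shiftInv_shift] at hup hdown
  calc γ (shift ω) < F.f ω (γ ω) := hup
    _ < F.f ω (η ω) := F.strictMonoOn_f ω (hγI ω) (hηI ω) hω
    _ < η (shift ω) := hdown

theorem disjoint_up_down (htrans : ShiftTransitive N A) : Disjoint (Up F) (Down F) := by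
  refine Set.disjoint_left.2 ?_
  rintro ⟨ω, x⟩ ⟨γ, hγc, hγI, hγ, hγx, hxγ⟩ ⟨η, hηc, hηI, hη, hηx, hxη⟩
  have hbelow : γ ω < η ω := hγx.trans hxη
  have habove : η (shiftInv ω) < γ (shiftInv ω) :=
    ((F.strictMonoOn_f _).lt_iff_lt (hηI _) (hγI _)).mp (hηx.trans hxγ)
  obtain ⟨ω', hlt : γ ω' < η ω', hgt : η ω' < γ ω'⟩ :=
    htrans.inter_nonempty_of_mapsTo (isOpen_lt hγc hηc) (isOpen_lt hηc hγc) ⟨ω, hbelow⟩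
      ⟨_, habove⟩ (F.mapsTo_shift_setOf_lt hγI hηI hγ hη)
  exact lt_asymm hlt hgt

lemma exists_pos_pushGraph_add_le {η : Sig N A → ℝ} (hηc : Continuous η)
    (hηI : ∀ ω, η ω ∈ Icc (0:ℝ) 1) (hη : DriftsDown F η) :
    ∃ ε > 0, ∀ ω, pushGraph F η ω + ε ≤ η ω := by
  obtain ⟨ε, hε, hle⟩ := isCompact_univ.exists_forall_le'
    (hηc.sub (F.continuous_pushGraph hηc hηI)).continuousOn
    fun ω _ => sub_pos.2 (hη ω)
  exact ⟨ε, hε, fun ω => le_sub_iff_add_le'.1 (hle ω (mem_univ ω))⟩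

lemma exists_pos_forall_mem_down {p : Sig N A × ℝ} (hp : p ∈ Down F) :
    ∃ ε > 0, ∀ G : SkewSys N A, SDist G F < ε → p ∈ Down G := by
  obtain ⟨η, hηc, hηI, hη, hηx, hxη⟩ := hp
  obtain ⟨ε, hε, hgap⟩ := F.exists_pos_pushGraph_add_le hηc hηI hη
  have hpush (G : SkewSys N A) (ω : Sig N A) :
      pushGraph G η ω ≤ pushGraph F η ω + SDist G F :=
    sub_le_iff_le_add'.1 <| (le_abs_self _).trans
      (G.abs_f_sub_f_le_sDist F (shiftInv ω) (hηI (shiftInv ω)))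
  refine ⟨min ε (p.2 - pushGraph F η p.1), lt_min hε (sub_pos.2 hηx), fun G hG => ?_⟩
  have hGε := hG.trans_le (min_le_left _ _)
  have hGx := hG.trans_le (min_le_right _ _)
  refine ⟨η, hηc, hηI, fun ω => ?_, ?_, hxη⟩
  · show pushGraph G η ω < η ω
    linarith [hpush G ω, hgap ω]
  · show pushGraph G η p.1 < p.2
    linarith [hpush G p.1]

end SkewSys

lemma ContFam.exists_mem_Ioo_sDist_lt {F : ℝ → SkewSys N A} {a b : ℝ} (hcont : ContFam F a b)
    {τ : ℝ} (hτ : τ ∈ Ioo a b) {ε : ℝ} (hε : 0 < ε) : ∃ t ∈ Ioo τ b, SDist (F t) (F τ) < ε := by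
  obtain ⟨δ, hδ, hclose⟩ := hcont τ hτ ε hε
  obtain ⟨t, hτt, ht⟩ := exists_between (lt_min (lt_add_of_pos_right τ hδ) hτ.2)
  obtain ⟨htδ, htb⟩ := lt_min_iff.1 ht
  exact ⟨t, ⟨hτt, htb⟩, hclose t ⟨hτ.1.trans hτt, htb⟩ (abs_lt.2 ⟨by linarith, by linarith⟩)⟩

theorem upPlus_down_disjoint_general {N : ℕ} {A : Fin N → Fin N → Bool}
    (htrans : ShiftTransitive N A) (F : ℝ → SkewSys N A) (a b : ℝ)
    (hcont : ContFam F a b) :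
    ∀ τ ∈ Ioo a b, (⋂ t ∈ Ioo τ b, Up (F t)) ∩ Down (F τ) = ∅ := by
  intro τ hτ
  refine Set.eq_empty_iff_forall_notMem.2 fun p ⟨hup, hdown⟩ => ?_
  obtain ⟨ε, hε, hstable⟩ := (F τ).exists_pos_forall_mem_down hdown
  obtain ⟨t, ht, hclose⟩ := hcont.exists_mem_Ioo_sDist_lt hτ hε
  exact Set.disjoint_left.1 ((F t).disjoint_up_down htrans) (mem_iInter₂.1 hup t ht)
    (hstable (F t) hclose)

/-- For a continuous monotone increasing family `(F_τ)_{τ∈(a,b)}`, for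
every `τ`, the sets `Up_{τ+} = ⋂_{δ>0} Up(F_{τ+δ})` and `Down_τ = Down(F_τ)` are
disjoint. -/
theorem upPlus_down_disjoint {N : ℕ} {A : Fin N → Fin N → Bool} (hN : 2 ≤ N)
    (htrans : ShiftTransitive N A) (F : ℝ → SkewSys N A) (a b : ℝ)
    (hmono : MonoFam F a b) (hcont : ContFam F a b) :
    ∀ τ ∈ Ioo a b, (⋂ t ∈ Ioo τ b, Up (F t)) ∩ Down (F τ) = ∅ :=
  upPlus_down_disjoint_general htrans F a b hcont

end SkewPaper
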